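/- arXiv:1509.02551 — 8 statements merged into one kernel-verified Lean document; each statement's English description precedes it below -/
import Mathlib

section
/- Let n ≥ 1, A : Matrix (Fin n) (Fin n) ℝ, u₁ : ℝ → ℝ with ContDiff ℝ ⊤ u₁, and x : ℝ → (Fin n → ℝ) with ContDiff ℝ ⊤ x. Assume that for all t : ℝ and all i : Fin n, HasDerivAt (fun s => x s i) ((A.mulVec (x t)) i + (if i = 0 then u₁ t else 0)) t. Let A₁ = A.submatrix Fin.succ Fin.succ (the submatrix of A obtained by deleting row 0 and column 0). Then for all t : ℝ, ∑_{k=0}^{n} (A.charpoly.coeff k) * iteratedDeriv k (fun s => x s 0) t = ∑_{k=0}^{n−1} (A₁.charpoly.coeff k) * iteratedDeriv k u₁ t. -/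
open Matrix Polynomial Finset

/-- The embedding `Fin (n-1) → Fin n` skipping `0` (deleting row/column `0`). -/
def finEmb (n : ℕ) (i : Fin (n - 1)) : Fin n :=
  ⟨i.1 + 1, by have := i.isLt; omega⟩

noncomputable def Bmat (m : ℕ) (A : Matrix (Fin (m+1)) (Fin (m+1)) ℝ) (j : ℕ) :
    Matrix (Fin (m+1)) (Fin (m+1)) ℝ :=
  ∑ k ∈ Finset.Ico (j+1) (m+2), A.charpoly.coeff k • A^(k-1-j)

variable {m : ℕ} (A : Matrix (Fin (m+1)) (Fin (m+1)) ℝ)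

lemma coeff_hi {k : ℕ} (hk : m+1 < k) : A.charpoly.coeff k = 0 := by
  apply Polynomial.coeff_eq_zero_of_natDegree_lt
  rw [Matrix.charpoly_natDegree_eq_dim]
  simpa using hk

lemma coeff_lead : A.charpoly.coeff (m+1) = 1 := by
  have h := (Matrix.charpoly_monic A).coeff_natDegree
  rwa [Matrix.charpoly_natDegree_eq_dim, Fintype.card_fin] at h

lemma Bmat_last : Bmat m A m = 1 := by
  simp [Bmat, Finset.Ico_add_one_right_eq_Icc, coeff_lead]

lemma Bmat_rec (j : ℕ) :
    Bmat m A j = A.charpoly.coeff (j+1) • 1 + A * Bmat m A (j+1) := by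
  rcases le_or_gt (m+1) j with hj | hj
  · rw [Bmat, Bmat, Finset.Ico_eq_empty (by omega), Finset.Ico_eq_empty (by omega)]
    simp [coeff_hi A (show m+1 < j+1 by omega)]
  · rw [Bmat, Finset.sum_eq_sum_Ico_succ_bot (by omega)]
    congr 1
    · simp
    · rw [Bmat, Finset.mul_sum]
      apply Finset.sum_congr rfl
      intro k hk
      simp only [Finset.mem_Ico] at hk
      have h1 : k - 1 - j = (k - 1 - (j+1)) + 1 := by omega
      rw [h1, pow_succ', mul_smul_comm]

lemma Bmat_zero : A.charpoly.coeff 0 • 1 + A * Bmat m A 0 = 0 := by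
  have hCH := Matrix.aeval_self_charpoly A
  rw [Polynomial.aeval_eq_sum_range, Matrix.charpoly_natDegree_eq_dim,
    Fintype.card_fin] at hCH
  have key : A * Bmat m A 0 = ∑ k ∈ Finset.Ico 1 (m+2), A.charpoly.coeff k • A^k := by
    rw [Bmat, Finset.mul_sum]
    apply Finset.sum_congr rfl
    intro k hk
    simp only [Finset.mem_Ico] at hk
    have h1 : k - 1 - 0 + 1 = k := by omega
    rw [mul_smul_comm, ← pow_succ', h1]
  rw [← hCH, Finset.range_eq_Ico, Finset.sum_eq_sum_Ico_succ_bot (by omega), key]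
  simp

lemma map_C_smul (c : ℝ) (M : Matrix (Fin (m+1)) (Fin (m+1)) ℝ) :
    (c • M).map (C : ℝ → ℝ[X]) = (C c : ℝ[X]) • M.map C := by
  ext i j
  simp [Matrix.map_apply, smul_eq_mul]

lemma charm_mul (N : Matrix (Fin (m+1)) (Fin (m+1)) ℝ[X]) :
    charmatrix A * N = (X : ℝ[X]) • N - (A.map C) * N := by
  rw [charmatrix, sub_mul]
  congr 1
  refine Matrix.ext fun i j => ?_
  rw [Matrix.scalar_apply, Matrix.diagonal_mul, Matrix.smul_apply, smul_eq_mul]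

noncomputable def Qmat (m : ℕ) (A : Matrix (Fin (m+1)) (Fin (m+1)) ℝ) :
    Matrix (Fin (m+1)) (Fin (m+1)) ℝ[X] :=
  ∑ j ∈ Finset.range (m+1), (X : ℝ[X])^j • (Bmat m A j).map C

lemma charm_mul_Q : charmatrix A * Qmat m A = A.charpoly • (1 : Matrix (Fin (m+1)) (Fin (m+1)) ℝ[X]) := by
  classical
  set G : ℕ → Matrix (Fin (m+1)) (Fin (m+1)) ℝ[X] :=
    fun j => if j = 0 then 0 else (X : ℝ[X])^j • (Bmat m A (j-1)).map C with hG
  have step : ∀ j, charmatrix A * ((X : ℝ[X])^j • (Bmat m A j).map C)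
      = (G (j+1) - G j) + ((C (A.charpoly.coeff j) : ℝ[X]) * X^j) • (1 : Matrix (Fin (m+1)) (Fin (m+1)) ℝ[X]) := by
    intro j
    rw [charm_mul, mul_smul_comm, ← Matrix.map_mul]
    cases j with
    | zero =>
      have hB0 : A * Bmat m A 0 = (-(A.charpoly.coeff 0)) • 1 := by
        rw [neg_smul]
        exact eq_neg_of_add_eq_zero_right (Bmat_zero A)
      rw [hB0, map_C_smul, Matrix.map_one C (map_zero C) (map_one C), _root_.map_neg]
      simp only [hG]
      simp only [if_pos rfl, if_neg (Nat.one_ne_zero), pow_zero, pow_one, one_smul,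
        Nat.add_sub_cancel, if_true]
      module
    | succ j =>
      have hA' : A * Bmat m A (j+1) = Bmat m A j - A.charpoly.coeff (j+1) • 1 := by
        rw [Bmat_rec A j]; abel
      rw [hA', Matrix.map_sub C (fun a b => map_sub C a b), map_C_smul, Matrix.map_one C (map_zero C) (map_one C)]
      simp only [hG]
      simp only [Nat.succ_ne_zero, if_false, Nat.add_sub_cancel]
      module
  rw [Qmat, Finset.mul_sum]
  rw [Finset.sum_congr rfl (fun j _ => step j), Finset.sum_add_distrib,
    Finset.sum_range_sub G]
  have hGtop : G (m+1) = (X : ℝ[X])^(m+1) • (1 : Matrix (Fin (m+1)) (Fin (m+1)) ℝ[X]) := by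
    simp [hG, Bmat_last, Matrix.map_one C (map_zero C) (map_one C)]
  have hG0 : G 0 = 0 := by simp [hG]
  rw [hGtop, hG0, sub_zero, ← Finset.sum_smul]
  rw [← add_smul]
  congr 1
  have hdeg : A.charpoly.natDegree < m + 2 := by
    rw [Matrix.charpoly_natDegree_eq_dim, Fintype.card_fin]; omega
  conv_rhs => rw [Polynomial.as_sum_range' _ _ hdeg, Finset.sum_range_succ]
  simp only [← Polynomial.C_mul_X_pow_eq_monomial]
  rw [coeff_lead, Polynomial.C_1, one_mul, add_comm]

lemma Qmat_eq_adjugate : Qmat m A = adjugate (charmatrix A) := by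
  have hp : (A.charpoly : ℝ[X]) ≠ 0 := (Matrix.charpoly_monic A).ne_zero
  have h1 : A.charpoly • Qmat m A = A.charpoly • adjugate (charmatrix A) := by
    calc A.charpoly • Qmat m A
        = (A.charpoly • (1 : Matrix (Fin (m+1)) (Fin (m+1)) ℝ[X])) * Qmat m A := by
          rw [smul_mul_assoc, one_mul]
      _ = (adjugate (charmatrix A) * charmatrix A) * Qmat m A := by
          rw [Matrix.adjugate_mul, Matrix.charpoly]
      _ = adjugate (charmatrix A) * (charmatrix A * Qmat m A) := by rw [mul_assoc]
      _ = adjugate (charmatrix A) * (A.charpoly • 1) := by rw [charm_mul_Q]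
      _ = A.charpoly • adjugate (charmatrix A) := by rw [mul_smul_comm, mul_one]
  refine Matrix.ext fun i j => ?_
  have h4 : A.charpoly * Qmat m A i j = A.charpoly * adjugate (charmatrix A) i j := by
    simpa [Matrix.smul_apply, smul_eq_mul] using congrFun (congrFun h1 i) j
  exact mul_left_cancel₀ hp h4

lemma charm_submatrix :
    (charmatrix A).submatrix Fin.succ (Fin.succ : Fin m → Fin (m+1)) =
      charmatrix (A.submatrix Fin.succ Fin.succ) := by
  refine Matrix.ext fun i j => ?_
  by_cases h : i = j
  · subst h
    simp [Matrix.submatrix_apply, charmatrix_apply_eq]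
  · have h' : Fin.succ i ≠ Fin.succ j := fun hc => h (Fin.succ_injective _ hc)
    simp [Matrix.submatrix_apply, charmatrix_apply_ne _ _ _ h', charmatrix_apply_ne _ _ _ h]

lemma Bmat_key (j : ℕ) (hj : j < m+1) :
    (Bmat m A j) 0 0 = ((A.submatrix Fin.succ Fin.succ).charpoly).coeff j := by
  have hQ : Qmat m A 0 0 = (A.submatrix Fin.succ Fin.succ).charpoly := by
    rw [Qmat_eq_adjugate, Matrix.adjugate_fin_succ_eq_det_submatrix]
    simp only [Fin.succAbove_zero]
    norm_num
    rw [charm_submatrix, Matrix.charpoly]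
  have hQ2 : Qmat m A 0 0 = ∑ i ∈ Finset.range (m+1), (C ((Bmat m A i) 0 0) : ℝ[X]) * X^i := by
    rw [Qmat, Matrix.sum_apply]
    refine Finset.sum_congr rfl fun i _ => ?_
    rw [Matrix.smul_apply, Matrix.map_apply, smul_eq_mul, mul_comm]
  rw [← hQ, hQ2, Polynomial.finset_sum_coeff]
  rw [Finset.sum_eq_single j]
  · simp [Polynomial.coeff_C_mul, Polynomial.coeff_X_pow]
  · intro b _ hbj
    simp [Polynomial.coeff_C_mul, Polynomial.coeff_X_pow, (Ne.symm hbj)]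
  · intro hj'
    exact absurd (Finset.mem_range.mpr hj) hj'

lemma hasDeriv_iter (u₁ : ℝ → ℝ) (hu : ContDiff ℝ (⊤ : ℕ∞) u₁) (j : ℕ) (t : ℝ) :
    HasDerivAt (iteratedDeriv j u₁) (iteratedDeriv (j+1) u₁ t) t := by
  have hdiff := hu.differentiable_iteratedDeriv j (by
    exact_mod_cast ENat.natCast_lt_top j)
  have h := (hdiff t).hasDerivAt
  rwa [iteratedDeriv_succ]

lemma deriv_formula {m : ℕ} (A : Matrix (Fin (m+1)) (Fin (m+1)) ℝ)
    (u₁ : ℝ → ℝ) (hu : ContDiff ℝ (⊤ : ℕ∞) u₁)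
    (x : ℝ → (Fin (m+1) → ℝ))
    (hode : ∀ (t : ℝ) (i : Fin (m+1)), HasDerivAt (fun s => x s i)
      ((A.mulVec (x t)) i + (if i = 0 then u₁ t else 0)) t) :
    ∀ (k : ℕ) (t : ℝ) (i : Fin (m+1)), iteratedDeriv k (fun s => x s i) t =
      ((A^k).mulVec (x t)) i
        + ∑ j ∈ Finset.range k, (A^(k-1-j)) i 0 * iteratedDeriv j u₁ t := by
  intro k
  induction k with
  | zero => intro t i; simp [Matrix.one_mulVec, iteratedDeriv_zero]
  | succ k ih =>
    intro t i
    have hfun : iteratedDeriv k (fun s => x s i) = fun t =>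
        (∑ j, (A^k) i j * x t j)
          + ∑ j ∈ Finset.range k, (A^(k-1-j)) i 0 * iteratedDeriv j u₁ t := by
      funext t
      rw [ih t i]
      rfl
    rw [iteratedDeriv_succ, hfun]
    have hder : HasDerivAt (fun t => (∑ j, (A^k) i j * x t j)
          + ∑ j ∈ Finset.range k, (A^(k-1-j)) i 0 * iteratedDeriv j u₁ t)
        ((∑ j, (A^k) i j * ((A.mulVec (x t)) j + (if j = 0 then u₁ t else 0)))
          + ∑ j ∈ Finset.range k, (A^(k-1-j)) i 0 * iteratedDeriv (j+1) u₁ t) t := by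
      apply HasDerivAt.add
      · exact HasDerivAt.fun_sum fun j _ => (hode t j).const_mul _
      · exact HasDerivAt.fun_sum fun j _ => (hasDeriv_iter u₁ hu j t).const_mul _
    rw [hder.deriv]
    have h1 : ∑ j, (A^k) i j * ((A.mulVec (x t)) j + (if j = 0 then u₁ t else 0))
        = ((A^(k+1)).mulVec (x t)) i + (A^k) i 0 * u₁ t := by
      simp only [mul_add]
      rw [Finset.sum_add_distrib]
      congr 1
      · rw [pow_succ, ← Matrix.mulVec_mulVec]
        rfl
      · simp only [mul_ite, mul_zero]
        rw [Finset.sum_ite_eq' Finset.univ (0 : Fin (m+1))]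
        simp
    rw [h1, Finset.sum_range_succ' _ k]
    have hsum : ∑ j ∈ Finset.range k, (A^(k+1-1-(j+1))) i 0 * iteratedDeriv (j+1) u₁ t
        = ∑ j ∈ Finset.range k, (A^(k-1-j)) i 0 * iteratedDeriv (j+1) u₁ t := by
      refine Finset.sum_congr rfl fun j _ => ?_
      have he : k+1-1-(j+1) = k-1-j := by omega
      rw [he]
    rw [hsum]
    simp only [Nat.add_sub_cancel, Nat.sub_zero, iteratedDeriv_zero]
    ring

lemma sum_range_swap (N : ℕ) (f : ℕ → ℕ → ℝ) :
    ∑ k ∈ Finset.range N, ∑ j ∈ Finset.range k, f k j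
      = ∑ j ∈ Finset.range N, ∑ k ∈ Finset.Ico (j+1) N, f k j := by
  calc ∑ k ∈ Finset.range N, ∑ j ∈ Finset.range k, f k j
      = ∑ k ∈ Finset.range N, ∑ j ∈ Finset.range N, if j < k then f k j else 0 := by
        refine Finset.sum_congr rfl fun k hk => ?_
        rw [← Finset.sum_filter]
        congr 1
        ext a
        simp only [Finset.mem_filter, Finset.mem_range]
        have := Finset.mem_range.mp hk
        omega
    _ = ∑ j ∈ Finset.range N, ∑ k ∈ Finset.range N, if j < k then f k j else 0 :=
        Finset.sum_comm
    _ = ∑ j ∈ Finset.range N, ∑ k ∈ Finset.Ico (j+1) N, f k j := by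
        refine Finset.sum_congr rfl fun j _ => ?_
        rw [← Finset.sum_filter]
        congr 1
        ext a
        simp only [Finset.mem_filter, Finset.mem_range, Finset.mem_Ico]
        omega

/-- **input–output equation.** If `x' = A x + u` with input
`u = (u₁, 0, …, 0)` and output `y = x₀`, then the characteristic polynomial of
`A` applied to `d/dt` acting on `y` equals the characteristic polynomial of
`A₁` (delete row `0` and column `0`) applied to `d/dt` acting on `u₁`. -/
theorem input_output_equation (n : ℕ) (hn : 1 ≤ n)
    (A : Matrix (Fin n) (Fin n) ℝ)
    (u₁ : ℝ → ℝ) (hu : ContDiff ℝ (⊤ : ℕ∞) u₁)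
    (x : ℝ → (Fin n → ℝ)) (hx : ContDiff ℝ (⊤ : ℕ∞) x)
    (hode : ∀ (t : ℝ) (i : Fin n), HasDerivAt (fun s => x s i)
      ((A.mulVec (x t)) i + (if i = (⟨0, hn⟩ : Fin n) then u₁ t else 0)) t) :
    ∀ t : ℝ,
      ∑ k ∈ Finset.range (n + 1),
        (A.charpoly.coeff k) * iteratedDeriv k (fun s => x s ⟨0, hn⟩) t =
      ∑ k ∈ Finset.range n,
        ((A.submatrix (finEmb n) (finEmb n)).charpoly.coeff k) *
          iteratedDeriv k u₁ t := by
  obtain ⟨m, rfl⟩ : ∃ m, n = m + 1 := ⟨n - 1, by omega⟩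
  intro t
  have hode' : ∀ (t : ℝ) (i : Fin (m+1)), HasDerivAt (fun s => x s i)
      ((A.mulVec (x t)) i + (if i = 0 then u₁ t else 0)) t := hode
  show ∑ k ∈ Finset.range (m+2),
        (A.charpoly.coeff k) * iteratedDeriv k (fun s => x s 0) t =
      ∑ k ∈ Finset.range (m+1),
        ((A.submatrix (Fin.succ) (Fin.succ)).charpoly.coeff k) * iteratedDeriv k u₁ t
  have hform := deriv_formula A u₁ hu x hode'
  have hL : ∑ k ∈ Finset.range (m+2),
        (A.charpoly.coeff k) * iteratedDeriv k (fun s => x s 0) t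
      = ∑ k ∈ Finset.range (m+2), (A.charpoly.coeff k) *
          (((A^k).mulVec (x t)) 0
            + ∑ j ∈ Finset.range k, (A^(k-1-j)) 0 0 * iteratedDeriv j u₁ t) :=
    Finset.sum_congr rfl fun k _ => by rw [hform k t 0]
  rw [hL]
  simp only [mul_add]
  rw [Finset.sum_add_distrib]
  have hCH : ∑ k ∈ Finset.range (m+2), A.charpoly.coeff k • A^k = 0 := by
    have h := Matrix.aeval_self_charpoly A
    rwa [Polynomial.aeval_eq_sum_range, Matrix.charpoly_natDegree_eq_dim,
      Fintype.card_fin] at h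
  have hS1 : ∑ k ∈ Finset.range (m+2),
      A.charpoly.coeff k * ((A^k).mulVec (x t)) 0 = 0 := by
    calc ∑ k ∈ Finset.range (m+2), A.charpoly.coeff k * ((A^k).mulVec (x t)) 0
        = ∑ k ∈ Finset.range (m+2), ∑ j : Fin (m+1),
            A.charpoly.coeff k * ((A^k) 0 j * x t j) := by
          refine Finset.sum_congr rfl fun k _ => ?_
          rw [show ((A^k).mulVec (x t)) 0 = ∑ j : Fin (m+1), (A^k) 0 j * x t j from rfl,
            Finset.mul_sum]
      _ = ∑ j : Fin (m+1), ∑ k ∈ Finset.range (m+2),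
            A.charpoly.coeff k * ((A^k) 0 j * x t j) := Finset.sum_comm
      _ = ∑ j : Fin (m+1),
            (∑ k ∈ Finset.range (m+2), A.charpoly.coeff k * (A^k) 0 j) * x t j := by
          refine Finset.sum_congr rfl fun j _ => ?_
          rw [Finset.sum_mul]
          exact Finset.sum_congr rfl fun k _ => (mul_assoc _ _ _).symm
      _ = 0 := by
          refine Finset.sum_eq_zero fun j _ => ?_
          have h5 : ∑ k ∈ Finset.range (m+2), A.charpoly.coeff k * (A^k) 0 j
              = (∑ k ∈ Finset.range (m+2), A.charpoly.coeff k • A^k) 0 j := by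
            rw [Matrix.sum_apply]
            rfl
          rw [h5, hCH, Matrix.zero_apply, zero_mul]
  have hS2 : ∑ k ∈ Finset.range (m+2), A.charpoly.coeff k *
        (∑ j ∈ Finset.range k, (A^(k-1-j)) 0 0 * iteratedDeriv j u₁ t)
      = ∑ j ∈ Finset.range (m+1),
          ((A.submatrix (Fin.succ) (Fin.succ)).charpoly.coeff j) * iteratedDeriv j u₁ t := by
    calc ∑ k ∈ Finset.range (m+2), A.charpoly.coeff k *
          (∑ j ∈ Finset.range k, (A^(k-1-j)) 0 0 * iteratedDeriv j u₁ t)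
        = ∑ k ∈ Finset.range (m+2), ∑ j ∈ Finset.range k,
            A.charpoly.coeff k * ((A^(k-1-j)) 0 0 * iteratedDeriv j u₁ t) := by
          exact Finset.sum_congr rfl fun k _ => Finset.mul_sum _ _ _
      _ = ∑ j ∈ Finset.range (m+2), ∑ k ∈ Finset.Ico (j+1) (m+2),
            A.charpoly.coeff k * ((A^(k-1-j)) 0 0 * iteratedDeriv j u₁ t) :=
          sum_range_swap _ _
      _ = ∑ j ∈ Finset.range (m+1), (Bmat m A j) 0 0 * iteratedDeriv j u₁ t := by
          rw [Finset.sum_range_succ]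
          rw [Finset.Ico_eq_empty (by omega), Finset.sum_empty, add_zero]
          refine Finset.sum_congr rfl fun j _ => ?_
          have hB : (Bmat m A j) 0 0
              = ∑ k ∈ Finset.Ico (j+1) (m+2), A.charpoly.coeff k * (A^(k-1-j)) 0 0 := by
            rw [Bmat, Matrix.sum_apply]
            rfl
          rw [hB, Finset.sum_mul]
          exact Finset.sum_congr rfl fun k _ => (mul_assoc _ _ _).symm
      _ = ∑ j ∈ Finset.range (m+1),
            ((A.submatrix (Fin.succ) (Fin.succ)).charpoly.coeff j) * iteratedDeriv j u₁ t := by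
          refine Finset.sum_congr rfl fun j hj => ?_
          rw [Bmat_key A j (Finset.mem_range.mp hj)]
  rw [hS1, hS2, zero_add]
end

section
/- Let n ≥ 2 and let G be a directed simple graph on Fin n with distinguished vertex 0. Let A ∈ Θ_G be such that the characteristic polynomial of A has n pairwise distinct complex roots and the characteristic polynomial of A₁ := A.submatrix Fin.succ Fin.succ has n−1 pairwise distinct complex roots. Then for every C ∈ Θ_G the following are equivalent: (a) for every k < n, deriv (fun t : ℂ => ((A + t • C).charpoly).coeff k) 0 = 0, and for every k < n−1, deriv (fun t : ℂ => (((A + t • C).submatrix Fin.succ Fin.succ).charpoly).coeff k) 0 = 0; (b) there exists X : Matrix (Fin n) (Fin n) ℂ with X*A − A*X = C, and there exists Y : Matrix (Fin (n−1)) (Fin (n−1)) ℂ with Y*A₁ − A₁*Y = C.submatrix Fin.succ Fin.succ. -/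
/-! If `A` has simple spectrum `f`, then `A = S * D * S⁻¹` with `D = diagonal f`; write
`C = S * B * S⁻¹`. By Jacobi's formula the `t`-derivative of `charpoly (D + t • B)` at `t = 0` is
`-∑ i, B i i • ∏_{j ≠ i} (X - f j)`, a polynomial of degree `< n` whose value at `f i` is
`-B i i * ∏_{j ≠ i} (f i - f j)`. So its `n` low coefficients vanish iff the diagonal of `B`
vanishes, which for distinct `f i` is exactly when `B = X * D - D * X` is solvable. Apply this to
`A` and to `A₁`. -/

open Matrix Polynomial

variable {V : Type*}

/-- The parameter space `Θ_G` of a directed simple graph given by the edge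
relation `E` (where `E j i` means there is an edge `j → i`): matrices whose
off-diagonal entry `(i,j)` vanishes unless `j → i` is an edge. -/
def Theta (E : V → V → Prop) : Set (Matrix V V ℂ) :=
  {A | ∀ i j, i ≠ j → ¬ E j i → A i j = 0}

namespace Polynomial

theorem coeff_one_prod_C_add_X_mul_C {R ι : Type*} [CommRing R] [DecidableEq ι] (s : Finset ι)
    (a b : ι → R) :
    (∏ i ∈ s, (C (a i) + X * C (b i))).coeff 1 = ∑ i ∈ s, (∏ j ∈ s.erase i, a j) * b i := by
  have h := coeff_derivative (∏ i ∈ s, (C (a i) + X * C (b i))) 0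
  rw [zero_add, Nat.cast_zero, zero_add, mul_one, coeff_zero_eq_eval_zero,
    derivative_prod_finset] at h
  rw [← h]
  simp [eval_finsetSum, eval_prod]

theorem deriv_coeff_eval_C {𝕜 : Type*} [NontriviallyNormedField 𝕜] (P : 𝕜[X][X]) (k : ℕ) :
    deriv (fun t => (P.eval (C t)).coeff k) 0 = (P.coeff 1).coeff k := by
  have hP : P.natDegree < P.natDegree + 2 := by omega
  set q : 𝕜[X] := ∑ j ∈ Finset.range (P.natDegree + 2), monomial j ((P.coeff j).coeff k)
  have hq : (fun t => (P.eval (C t)).coeff k) = fun t => q.eval t := by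
    funext t
    rw [eval_eq_sum_range' hP, finsetSum_coeff, eval_finsetSum]
    simp only [← C_pow, coeff_mul_C, eval_monomial]
  rw [hq, Polynomial.deriv, ← coeff_zero_eq_eval_zero, coeff_derivative]
  simp [q, finsetSum_coeff, coeff_monomial]

theorem forall_coeff_eq_zero_iff_of_degree_lt {R : Type*} [Semiring R] {p : R[X]} {n : ℕ}
    (hp : p.degree < n) : (∀ k < n, p.coeff k = 0) ↔ p = 0 := by
  refine ⟨fun h => ext fun k => ?_, fun h k _ => by simp [h]⟩
  rw [coeff_zero]
  by_cases hk : k < n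
  · exact h k hk
  · exact coeff_eq_zero_of_degree_lt (hp.trans_le (by exact_mod_cast not_lt.1 hk))

end Polynomial

namespace Lagrange

variable {ι K : Type*} [Fintype ι] [DecidableEq ι] [Field K] {f : ι → K}

theorem degree_sum_C_mul_nodal_erase_lt (c : ι → K) :
    (∑ i, C (c i) * nodal (Finset.univ.erase i) f).degree < Fintype.card ι := by
  refine (degree_sum_le _ _).trans_lt ((Finset.sup_lt_iff (WithBot.bot_lt_coe _)).2 fun i _ => ?_)
  rw [C_mul']
  refine (degree_smul_le _ _).trans_lt ?_
  rw [degree_nodal, Finset.card_erase_of_mem (Finset.mem_univ i), Finset.card_univ]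
  exact_mod_cast Nat.sub_lt (Fintype.card_pos_iff.2 ⟨i⟩) one_pos

theorem eval_sum_C_mul_nodal_erase (c : ι → K) (i : ι) :
    (∑ j, C (c j) * nodal (Finset.univ.erase j) f).eval (f i)
      = c i * ∏ j ∈ Finset.univ.erase i, (f i - f j) := by
  rw [eval_finsetSum, Finset.sum_eq_single i, eval_mul, eval_C, eval_nodal]
  · intro j _ hji
    rw [eval_mul, eval_nodal_at_node (Finset.mem_erase.2 ⟨hji.symm, Finset.mem_univ i⟩), mul_zero]
  · simp

theorem sum_C_mul_nodal_erase_eq_zero_iff (hf : Function.Injective f) (c : ι → K) :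
    ∑ i, C (c i) * nodal (Finset.univ.erase i) f = 0 ↔ ∀ i, c i = 0 := by
  refine ⟨fun h i => ?_, fun h => by simp [h]⟩
  have := eval_sum_C_mul_nodal_erase (f := f) c i
  rw [h, eval_zero, eq_comm, mul_eq_zero] at this
  refine this.resolve_right (Finset.prod_ne_zero_iff.2 fun j hj => sub_ne_zero.2 ?_)
  exact hf.ne (Finset.ne_of_mem_erase hj).symm

end Lagrange

theorem exists_mul_sub_mul_eq_conj_iff {R : Type*} [Ring R] (u : Rˣ) (a b : R) :
    (∃ x, x * (u * a * ↑u⁻¹) - u * a * ↑u⁻¹ * x = u * b * ↑u⁻¹) ↔ ∃ x, x * a - a * x = b := by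
  constructor
  · rintro ⟨x, hx⟩
    refine ⟨↑u⁻¹ * x * u, ?_⟩
    have := congrArg (fun y : R => ↑u⁻¹ * y * ↑u) hx
    simpa [mul_sub, sub_mul, mul_assoc] using this
  · rintro ⟨x, rfl⟩
    exact ⟨u * x * ↑u⁻¹, by simp [mul_sub, sub_mul, mul_assoc]⟩

namespace Matrix

variable {ι : Type*} [Fintype ι] [DecidableEq ι]

section CommRing

variable {R : Type*} [CommRing R]

theorem coeff_one_det_map_C_add_X_smul (M N : Matrix ι ι R) :
    (det (M.map C + (X : R[X]) • N.map C)).coeff 1 = trace (adjugate M * N) := by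
  calc (det (M.map C + (X : R[X]) • N.map C)).coeff 1
      = ∑ i, (M.updateCol i fun r => N r i).det := by
        simp only [det_apply, finsetSum_coeff, add_apply, map_apply, smul_apply, smul_eq_mul,
          Units.smul_def, coeff_smul, coeff_one_prod_C_add_X_mul_C, Finset.smul_sum]
        rw [Finset.sum_comm]
        refine Finset.sum_congr rfl fun i _ => Finset.sum_congr rfl fun σ _ => ?_
        rw [← Finset.prod_erase_mul _ _ (Finset.mem_univ i), updateCol_self]
        congr 2
        exact Finset.prod_congr rfl fun j hj => (updateCol_ne (Finset.ne_of_mem_erase hj)).symm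
    _ = trace (adjugate M * N) := by
        simp only [← cramer_apply, cramer_eq_adjugate_mulVec, trace, diag_apply, mul_apply, mulVec,
          dotProduct]

theorem eval_det_map_C_add_X_smul (M N : Matrix ι ι R) (s : R) :
    (det (M.map C + (X : R[X]) • N.map C)).eval s = det (M + s • N) := by
  rw [← coe_evalRingHom, RingHom.map_det]
  congr 1
  ext i j
  simp only [RingHom.mapMatrix_apply, map_apply, add_apply, smul_apply, smul_eq_mul,
    coe_evalRingHom, eval_add, eval_mul, eval_C, eval_X]

theorem charmatrix_add_smul (A B : Matrix ι ι R) (t : R) :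
    charmatrix (A + t • B) = charmatrix A + C t • (-B.map C) := by
  ext i j : 1
  simp only [charmatrix_apply, add_apply, smul_apply, neg_apply, map_apply, smul_eq_mul, map_add,
    map_mul]
  ring

theorem trace_adjugate_charmatrix_diagonal_mul (f : ι → R) (B : Matrix ι ι R) :
    trace (adjugate (charmatrix (diagonal f)) * B.map C)
      = ∑ i, C (B i i) * Lagrange.nodal (Finset.univ.erase i) f := by
  simp [charmatrix_diagonal, adjugate_diagonal, trace, diagonal_mul, Lagrange.nodal, mul_comm]

end CommRing

section Field

variable {K : Type*} [Field K]

theorem exists_units_conj_eq_diagonal (A : Matrix ι ι K) {f : ι → K} (hf : Function.Injective f)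
    (hA : A.charpoly = ∏ i, (X - C (f i))) :
    ∃ S : (Matrix ι ι K)ˣ, A = (S : Matrix ι ι K) * diagonal f * (↑S⁻¹ : Matrix ι ι K) := by
  have hroot (i : ι) : Module.End.HasEigenvalue (toLin' A) (f i) := by
    rw [Module.End.hasEigenvalue_iff_isRoot_charpoly, charpoly_toLin', hA, IsRoot, eval_prod]
    exact Finset.prod_eq_zero (Finset.mem_univ i) (by simp)
  choose v hv using fun i => (hroot i).exists_hasEigenvector
  let b := basisOfLinearIndependentOfCardEqFinrank' v
    (Module.End.eigenvectors_linearIndependent' _ f hf v hv) (by simp)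
  let e := Pi.basisFun K ι
  have hdiag : LinearMap.toMatrix b b (toLin' A) = diagonal f := by
    ext i j
    have hbj : b j = v j := by simp [b]
    rw [LinearMap.toMatrix_apply, hbj, (hv j).apply_eq_smul, ← hbj, map_smul, b.repr_self]
    rcases eq_or_ne i j with rfl | hij <;> simp [*]
  have hconj : b.toMatrix e * A * e.toMatrix b = diagonal f := by
    rw [← hdiag, ← basis_toMatrix_mul_linearMap_toMatrix_mul_basis_toMatrix b e b e,
      LinearMap.toMatrix_eq_toMatrix', LinearMap.toMatrix'_toLin']
  refine ⟨⟨e.toMatrix b, b.toMatrix e, e.toMatrix_mul_toMatrix_flip b,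
    b.toMatrix_mul_toMatrix_flip e⟩, ?_⟩
  simp only [← hconj, Units.inv_mk, ← mul_assoc, e.toMatrix_mul_toMatrix_flip, one_mul]
  simp only [mul_assoc, e.toMatrix_mul_toMatrix_flip, mul_one]

theorem exists_mul_diagonal_sub_diagonal_mul_eq_iff {f : ι → K} (hf : Function.Injective f)
    (B : Matrix ι ι K) : (∃ X, X * diagonal f - diagonal f * X = B) ↔ ∀ i, B i i = 0 := by
  constructor
  · rintro ⟨X, rfl⟩ i
    simp [mul_comm]
  · intro h
    refine ⟨of fun i j => B i j / (f j - f i), ext fun i j => ?_⟩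
    rcases eq_or_ne i j with rfl | hij
    · simp [h]
    · have : f j - f i ≠ 0 := sub_ne_zero.2 (hf.ne hij.symm)
      simp only [sub_apply, mul_diagonal, of_apply, diagonal_mul]
      field_simp

end Field

section NormedField

variable {𝕜 : Type*} [NontriviallyNormedField 𝕜]

theorem deriv_coeff_charpoly_add_smul (A B : Matrix ι ι 𝕜) (k : ℕ) :
    deriv (fun t : 𝕜 => (A + t • B).charpoly.coeff k) 0
      = -(trace (adjugate (charmatrix A) * B.map C)).coeff k := by
  have h (t : 𝕜) : (A + t • B).charpoly
      = (det ((charmatrix A).map C + (X : 𝕜[X][X]) • (-B.map C).map C)).eval (C t) := by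
    rw [charpoly, charmatrix_add_smul, eval_det_map_C_add_X_smul]
  simp only [h]
  rw [deriv_coeff_eval_C, coeff_one_det_map_C_add_X_smul, mul_neg, trace_neg, coeff_neg]

theorem forall_deriv_coeff_charpoly_add_smul_eq_zero_iff (A B : Matrix ι ι 𝕜)
    (hA : ∃ f : ι → 𝕜, Function.Injective f ∧ A.charpoly = ∏ i, (X - C (f i))) :
    (∀ k < Fintype.card ι, deriv (fun t : 𝕜 => (A + t • B).charpoly.coeff k) 0 = 0)
      ↔ ∃ X, X * A - A * X = B := by
  obtain ⟨f, hf, hA⟩ := hA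
  obtain ⟨S, rfl⟩ := exists_units_conj_eq_diagonal A hf hA
  obtain ⟨B, rfl⟩ : ∃ B' : Matrix ι ι 𝕜, B = S * B' * (↑S⁻¹ : Matrix ι ι 𝕜) :=
    ⟨(↑S⁻¹ : Matrix ι ι 𝕜) * B * S, by simp [mul_assoc]⟩
  have hconj (t : 𝕜) : S * diagonal f * (↑S⁻¹ : Matrix ι ι 𝕜) + t • (S * B * (↑S⁻¹ : Matrix ι ι 𝕜))
      = S * (diagonal f + t • B) * (S : Matrix ι ι 𝕜)⁻¹ := by
    simp [mul_add, add_mul, coe_units_inv]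
  simp only [hconj, charpoly_units_conj, deriv_coeff_charpoly_add_smul,
    trace_adjugate_charmatrix_diagonal_mul, neg_eq_zero]
  rw [exists_mul_sub_mul_eq_conj_iff, exists_mul_diagonal_sub_diagonal_mul_eq_iff hf,
    forall_coeff_eq_zero_iff_of_degree_lt (Lagrange.degree_sum_C_mul_nodal_erase_lt _),
    Lagrange.sum_C_mul_nodal_erase_eq_zero_iff hf]

end NormedField

end Matrix

theorem kernel_of_differential_general (n : ℕ)
    (A : Matrix (Fin n) (Fin n) ℂ)
    (hroots : ∃ f : Fin n → ℂ, Function.Injective f ∧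
      A.charpoly = ∏ i, (X - Polynomial.C (f i)))
    (hroots1 : ∃ f : Fin (n - 1) → ℂ, Function.Injective f ∧
      (A.submatrix (finEmb n) (finEmb n)).charpoly
        = ∏ i, (X - Polynomial.C (f i)))
    (C : Matrix (Fin n) (Fin n) ℂ) :
    ((∀ k < n, deriv (fun t : ℂ => ((A + t • C).charpoly).coeff k) 0 = 0) ∧
      (∀ k < n - 1, deriv (fun t : ℂ =>
        (((A + t • C).submatrix (finEmb n) (finEmb n)).charpoly).coeff k) 0
          = 0))
    ↔
    ((∃ X : Matrix (Fin n) (Fin n) ℂ, X * A - A * X = C) ∧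
      (∃ Y : Matrix (Fin (n - 1)) (Fin (n - 1)) ℂ,
        Y * (A.submatrix (finEmb n) (finEmb n))
          - (A.submatrix (finEmb n) (finEmb n)) * Y
          = C.submatrix (finEmb n) (finEmb n))) := by
  have h := forall_deriv_coeff_charpoly_add_smul_eq_zero_iff A C hroots
  have h₁ := forall_deriv_coeff_charpoly_add_smul_eq_zero_iff _ (C.submatrix (finEmb n) (finEmb n))
    hroots1
  rw [Fintype.card_fin] at h h₁
  simp only [submatrix_add, submatrix_smul]
  exact and_congr h h₁

/-- **kernel of the differential.** For `A ∈ Θ_G` whose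
characteristic polynomial has `n` distinct roots and such that the
characteristic polynomial of `A₁` has `n-1` distinct roots, a matrix
`C ∈ Θ_G` kills all directional derivatives of the coefficients of the double
characteristic polynomial map at `A` if and only if `C = [X, A]` for some `X`
and `C₁ = [Y, A₁]` for some `Y`. -/
theorem kernel_of_differential (n : ℕ) (hn : 2 ≤ n)
    (E : Fin n → Fin n → Prop) (hirr : ∀ v, ¬ E v v)
    (A : Matrix (Fin n) (Fin n) ℂ) (hA : A ∈ Theta E)
    (hroots : ∃ f : Fin n → ℂ, Function.Injective f ∧
      A.charpoly = ∏ i, (X - Polynomial.C (f i)))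
    (hroots1 : ∃ f : Fin (n - 1) → ℂ, Function.Injective f ∧
      (A.submatrix (finEmb n) (finEmb n)).charpoly
        = ∏ i, (X - Polynomial.C (f i)))
    (C : Matrix (Fin n) (Fin n) ℂ) (hC : C ∈ Theta E) :
    ((∀ k < n, deriv (fun t : ℂ => ((A + t • C).charpoly).coeff k) 0 = 0) ∧
      (∀ k < n - 1, deriv (fun t : ℂ =>
        (((A + t • C).submatrix (finEmb n) (finEmb n)).charpoly).coeff k) 0
          = 0))
    ↔
    ((∃ X : Matrix (Fin n) (Fin n) ℂ, X * A - A * X = C) ∧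
      (∃ Y : Matrix (Fin (n - 1)) (Fin (n - 1)) ℂ,
        Y * (A.submatrix (finEmb n) (finEmb n))
          - (A.submatrix (finEmb n) (finEmb n)) * Y
          = C.submatrix (finEmb n) (finEmb n))) :=
  kernel_of_differential_general n A hroots hroots1 C
end

section
/- For every n : ℕ, every pair of matrices A, X : Matrix (Fin n) (Fin n) ℂ and every k : ℕ, the complex derivative at 0 of the map t ↦ ((A + t • (X * A − A * X)).charpoly).coeff k equals 0; that is, every coefficient of the characteristic polynomial has vanishing directional derivative at A in any commutator direction [X, A]. -/
/-!
Conjugating by `1 + εY` over the dual numbers `R[ε]` turns `A` into `A + ε[Y, A]`, so the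
characteristic polynomial of `A + ε[Y, A]` is that of `A`. On the other hand, each coefficient of
the characteristic polynomial of `A + t[Y, A]` is a polynomial `p(t)`, and evaluating at `ε` gives
`p(0) + p'(0) ε`; comparing `ε`-parts gives `p'(0) = 0`.
-/

open Matrix Polynomial DualNumber

namespace Matrix

variable {n R S : Type*} [Fintype n] [DecidableEq n] [CommRing R] [CommRing S] [Algebra R S]

theorem charpoly_mul_mul_of_mul_eq_one {P Q : Matrix n n R} (hQP : Q * P = 1)
    (M : Matrix n n R) : (P * M * Q).charpoly = M.charpoly := by
  rw [charpoly_mul_comm, ← mul_assoc, hQP, one_mul]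

theorem charpoly_add_eps_smul_commutator (A Y : Matrix n n R[ε]) :
    (A + (ε : R[ε]) • (Y * A - A * Y)).charpoly = A.charpoly := by
  have hconj : (1 + (ε : R[ε]) • Y : Matrix n n R[ε]) * A * (1 - (ε : R[ε]) • Y) =
      A + (ε : R[ε]) • (Y * A - A * Y) := by
    simp only [mul_sub, add_mul, one_mul, mul_one, smul_mul_assoc, mul_smul_comm, smul_add,
      smul_sub, smul_smul, eps_mul_eps, zero_smul, add_zero, mul_assoc]
    abel
  have hinv : (1 - (ε : R[ε]) • Y : Matrix n n R[ε]) * (1 + (ε : R[ε]) • Y) = 1 := by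
    simp only [mul_add, sub_mul, one_mul, mul_one, smul_mul_assoc, mul_smul_comm, smul_sub,
      smul_smul, eps_mul_eps, zero_smul, sub_zero]
    abel
  rw [← hconj, charpoly_mul_mul_of_mul_eq_one hinv]

/-- The polynomial `t ↦ (A + t • B).charpoly.coeff k`. -/
noncomputable def lineCharpolyCoeff (A B : Matrix n n R) (k : ℕ) : R[X] :=
  (A.map C + (X : R[X]) • B.map C).charpoly.coeff k

theorem aeval_lineCharpolyCoeff (A B : Matrix n n R) (k : ℕ) (s : S) :
    aeval s (lineCharpolyCoeff A B k) =
      (A.map (algebraMap R S) + s • B.map (algebraMap R S)).charpoly.coeff k := by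
  have hmap : (A.map C + (X : R[X]) • B.map C).map (aeval s).toRingHom =
      A.map (algebraMap R S) + s • B.map (algebraMap R S) := by
    ext i j
    simp only [add_apply, smul_apply, map_apply, smul_eq_mul, map_add, map_mul,
      AlgHom.toRingHom_eq_coe, RingHom.coe_coe, aeval_C, aeval_X]
  rw [lineCharpolyCoeff, ← hmap, charpoly_map, coeff_map]
  rfl

theorem eval_lineCharpolyCoeff (A B : Matrix n n R) (k : ℕ) (t : R) :
    (lineCharpolyCoeff A B k).eval t = (A + t • B).charpoly.coeff k := by
  simpa using aeval_lineCharpolyCoeff (S := R) A B k t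

theorem derivative_lineCharpolyCoeff_commutator_eval_zero (A Y : Matrix n n R) (k : ℕ) :
    (lineCharpolyCoeff A (Y * A - A * Y) k).derivative.eval 0 = 0 := by
  set p := lineCharpolyCoeff A (Y * A - A * Y) k
  have hε : aeval (ε : R[ε]) p = algebraMap R R[ε] (A.charpoly.coeff k) := by
    rw [aeval_lineCharpolyCoeff, Matrix.map_sub _ (map_sub _), Matrix.map_mul, Matrix.map_mul,
      charpoly_add_eps_smul_commutator, charpoly_map, coeff_map]
  have hTaylor : aeval (ε : R[ε]) p =
      algebraMap R R[ε] (p.coeff 0) + algebraMap R R[ε] (p.derivative.coeff 0) * ε := by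
    simpa only [zero_add, ← coeff_zero_eq_aeval_zero'] using
      aeval_add_of_sq_eq_zero p 0 (ε : R[ε]) eps_pow_two
  rw [← coeff_zero_eq_eval_zero]
  simpa [hε, TrivSqZeroExt.algebraMap_eq_inl] using congrArg TrivSqZeroExt.snd hTaylor.symm

end Matrix

/-- Every coefficient of the characteristic polynomial has
vanishing directional derivative at `A` in any commutator direction
`[X, A] = X*A - A*X`. -/
theorem charpoly_coeff_deriv_commutator_eq_zero (n : ℕ)
    (A X : Matrix (Fin n) (Fin n) ℂ) (k : ℕ) :
    deriv (fun t : ℂ => ((A + t • (X * A - A * X)).charpoly).coeff k) 0 = 0 := by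
  simp_rw [← eval_lineCharpolyCoeff, Polynomial.deriv]
  exact derivative_lineCharpolyCoeff_commutator_eval_zero A X k
end

section
/- Let n ≥ 1 and let E : Fin n → Fin n → Prop be an irreflexive relation that is strongly connected (Relation.ReflTransGen E u v holds for all u, v). Let A : Matrix (Fin n) (Fin n) ℂ satisfy A i j ≠ 0 whenever E j i. If D : Matrix (Fin n) (Fin n) ℂ is diagonal (D i j = 0 for all i ≠ j) and D * A = A * D, then there exists c : ℂ with D = c • (1 : Matrix (Fin n) (Fin n) ℂ). -/
/-!
The `(i, j)` entries of `D * A` and `A * D` are `D i i * A i j` and `A i j * D j j`, so along every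
edge `j → i`, where `A i j ≠ 0`, the diagonal of `D` takes equal values; strong connectivity then
makes it constant.
-/

open Matrix

theorem Matrix.eq_of_diagonal_mul_eq_mul_diagonal {ι R : Type*} [Fintype ι] [DecidableEq ι]
    [CommSemiring R] [IsLeftCancelMulZero R] {d : ι → R} {A : Matrix ι ι R}
    (hcomm : diagonal d * A = A * diagonal d) {i j : ι} (hA : A i j ≠ 0) : d i = d j := by
  have hij := congrFun (congrFun hcomm i) j
  rw [diagonal_mul, mul_diagonal, mul_comm] at hij
  exact mul_left_cancel₀ hA hij

theorem Relation.ReflTransGen.apply_eq {α β : Type*} {r : α → α → Prop} {f : α → β}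
    (hf : ∀ a b, r a b → f a = f b) {a b : α} (hab : Relation.ReflTransGen r a b) : f a = f b := by
  simpa [Relation.reflTransGen_eq_self] using hab.lift f hf

theorem diagonal_commuting_is_scalar_general (n : ℕ) (hn : 1 ≤ n)
    (E : Fin n → Fin n → Prop)
    (hsc : ∀ u v : Fin n, Relation.ReflTransGen E u v)
    (A : Matrix (Fin n) (Fin n) ℂ) (hA : ∀ i j, E j i → A i j ≠ 0)
    (D : Matrix (Fin n) (Fin n) ℂ) (hD : ∀ i j, i ≠ j → D i j = 0)
    (hcomm : D * A = A * D) :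
    ∃ c : ℂ, D = c • (1 : Matrix (Fin n) (Fin n) ℂ) := by
  have hdiag : diagonal D.diag = D := IsDiag.diagonal_diag fun i j => hD i j
  have hstep : ∀ u v, E u v → D.diag u = D.diag v := fun u v huv =>
    (eq_of_diagonal_mul_eq_mul_diagonal (by rwa [hdiag]) (hA v u huv)).symm
  let i₀ : Fin n := ⟨0, hn⟩
  refine ⟨D i₀ i₀, ?_⟩
  calc D = diagonal D.diag := hdiag.symm
    _ = diagonal fun _ => D i₀ i₀ := congrArg diagonal (funext fun i => (hsc i i₀).apply_eq hstep)
    _ = D i₀ i₀ • 1 := (smul_one_eq_diagonal _).symm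

/-- For a strongly connected directed simple graph on `Fin n`
and `A` with nonzero entries on all edge positions, any diagonal matrix
commuting with `A` is a scalar multiple of the identity. -/
theorem diagonal_commuting_is_scalar (n : ℕ) (hn : 1 ≤ n)
    (E : Fin n → Fin n → Prop) (hirr : ∀ v, ¬ E v v)
    (hsc : ∀ u v : Fin n, Relation.ReflTransGen E u v)
    (A : Matrix (Fin n) (Fin n) ℂ) (hA : ∀ i j, E j i → A i j ≠ 0)
    (D : Matrix (Fin n) (Fin n) ℂ) (hD : ∀ i j, i ≠ j → D i j = 0)
    (hcomm : D * A = A * D) :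
    ∃ c : ℂ, D = c • (1 : Matrix (Fin n) (Fin n) ℂ) :=
  diagonal_commuting_is_scalar_general n hn E hsc A hA D hD hcomm
end

section
/- Let n ≥ 1, let P : Matrix (Fin n) (Fin n) ℂ be invertible, let D : Matrix (Fin n) (Fin n) ℂ be diagonal with pairwise distinct diagonal entries, and set A = P * D * P⁻¹. Let r : Fin n be such that P r j ≠ 0 for every j : Fin n (every entry of row r of P is nonzero). Then the ℂ-linear map from the centralizer {M : Matrix (Fin n) (Fin n) ℂ | M * A = A * M} to (Fin n → ℂ) sending M to its row r (the function j ↦ M r j) is bijective. -/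
/-! Conjugating by `P` reduces everything to `D`: a matrix commuting with a diagonal matrix with
distinct entries is itself diagonal, so the centralizer of `P * D * P⁻¹` is exactly
`{P * diagonal e * P⁻¹}`, parametrized injectively by `e`. The `r`-th row of `P * diagonal e * P⁻¹`
is `(P r * e) ᵥ* P⁻¹`, which is a bijective function of `e` because `P r` is a unit of
`Fin n → ℂ` and `P⁻¹` is invertible. -/

open Matrix

/-- The centralizer of `A` in `gl_n`, as a `ℂ`-linear subspace of the space of
matrices. -/
noncomputable def matrixCentralizer (n : ℕ) (A : Matrix (Fin n) (Fin n) ℂ) :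
    Submodule ℂ (Matrix (Fin n) (Fin n) ℂ) where
  carrier := {X | X * A = A * X}
  add_mem' := by
    intro a b ha hb
    simp only [Set.mem_setOf_eq] at *
    rw [add_mul, mul_add, ha, hb]
  zero_mem' := by simp
  smul_mem' := by
    intro c x hx
    simp only [Set.mem_setOf_eq] at *
    rw [smul_mul_assoc, mul_smul_comm, hx]

open Function

namespace Matrix

variable {ι R : Type*} [Fintype ι] [DecidableEq ι] [CommRing R]

theorem eq_diagonal_diag_of_commute_diagonal [NoZeroDivisors R] {d : ι → R} (hd : Injective d)
    {E : Matrix ι ι R} (h : Commute E (diagonal d)) : E = diagonal E.diag := by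
  ext i j
  rcases eq_or_ne i j with rfl | hij
  · simp
  · have hEd : (E * diagonal d) i j = (diagonal d * E) i j := by rw [h.eq]
    rw [mul_diagonal, diagonal_mul] at hEd
    have hprod : E i j * (d j - d i) = 0 := by linear_combination hEd
    rw [diagonal_apply_ne _ hij]
    exact (mul_eq_zero.mp hprod).resolve_right (sub_ne_zero.mpr (hd.ne hij.symm))

theorem commute_conj_iff {P : Matrix ι ι R} (hP : IsUnit P.det) {M A : Matrix ι ι R} :
    Commute M (P * A * P⁻¹) ↔ Commute (P⁻¹ * M * P) A := by
  have hPP : P * P⁻¹ = 1 := mul_nonsing_inv P hP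
  have hPP' : P⁻¹ * P = 1 := nonsing_inv_mul P hP
  constructor
  · intro h
    calc P⁻¹ * M * P * A = P⁻¹ * (M * (P * A * P⁻¹)) * P := by
          simp only [Matrix.mul_assoc, hPP', Matrix.mul_one]
      _ = P⁻¹ * (P * A * P⁻¹ * M) * P := by rw [h.eq]
      _ = A * (P⁻¹ * M * P) := by
          simp only [← Matrix.mul_assoc, hPP', Matrix.one_mul]
  · intro h
    calc M * (P * A * P⁻¹) = P * (P⁻¹ * M * P * A) * P⁻¹ := by
          simp only [← Matrix.mul_assoc, hPP, Matrix.one_mul]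
      _ = P * (A * (P⁻¹ * M * P)) * P⁻¹ := by rw [h.eq]
      _ = P * A * P⁻¹ * M := by
          simp only [Matrix.mul_assoc, hPP, Matrix.mul_one]

theorem commute_conj_diagonal_iff [NoZeroDivisors R] {d : ι → R} (hd : Injective d)
    {P : Matrix ι ι R} (hP : IsUnit P.det) {M : Matrix ι ι R} :
    Commute M (P * diagonal d * P⁻¹) ↔ ∃ e, P * diagonal e * P⁻¹ = M := by
  have hPP : P * P⁻¹ = 1 := mul_nonsing_inv P hP
  have hPP' : P⁻¹ * P = 1 := nonsing_inv_mul P hP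
  rw [commute_conj_iff hP]
  constructor
  · intro h
    refine ⟨(P⁻¹ * M * P).diag, ?_⟩
    rw [← eq_diagonal_diag_of_commute_diagonal hd h]
    simp only [← Matrix.mul_assoc, hPP, Matrix.one_mul]
    simp only [Matrix.mul_assoc, hPP, Matrix.mul_one]
  · rintro ⟨e, rfl⟩
    simp only [← Matrix.mul_assoc, hPP', Matrix.one_mul]
    simp only [Matrix.mul_assoc, hPP', Matrix.mul_one]
    exact commute_diagonal e d

theorem conj_diagonal_injective {P : Matrix ι ι R} (hP : IsUnit P.det) :
    Injective fun e : ι → R => P * diagonal e * P⁻¹ := by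
  intro e e' h
  apply diagonal_injective
  simpa only [Matrix.mul_assoc, nonsing_inv_mul_cancel_left _ _ hP,
    nonsing_inv_mul P hP, Matrix.mul_one] using congrArg (P⁻¹ * · * P) h

theorem mul_diagonal_mul_apply_eq_vecMul (P Q : Matrix ι ι R) (e : ι → R) (r : ι) :
    (P * diagonal e * Q) r = (P r * e) ᵥ* Q := by
  rw [mul_apply_eq_vecMul, mul_apply_eq_vecMul]
  congr 1
  funext k
  exact vecMul_diagonal _ _ _

theorem bijective_mul_vecMul {v : ι → R} (hv : IsUnit v) {Q : Matrix ι ι R} (hQ : IsUnit Q) :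
    Bijective fun e => (v * e) ᵥ* Q :=
  Bijective.comp (g := fun w => w ᵥ* Q)
    ⟨vecMul_injective_of_isUnit hQ, vecMul_surjective_iff_isUnit.2 hQ⟩
    (IsUnit.isUnit_iff_mulLeft_bijective.1 hv)

end Matrix

theorem centralizer_row_projection_bijective_general (n : ℕ)
    (P D : Matrix (Fin n) (Fin n) ℂ) (hP : IsUnit P.det)
    (hDdiag : ∀ i j, i ≠ j → D i j = 0)
    (hDdist : ∀ i j, i ≠ j → D i i ≠ D j j)
    (r : Fin n) (hr : ∀ j, P r j ≠ 0) :
    Function.Bijective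
      (fun M : matrixCentralizer n (P * D * P⁻¹) =>
        fun j => (M : Matrix (Fin n) (Fin n) ℂ) r j) := by
  have hD : diagonal D.diag = D := IsDiag.diagonal_diag fun i j h => hDdiag i j h
  have hd : Injective D.diag := fun i j h => by_contra fun hij => hDdist i j hij h
  rw [← hD]
  let conj (e : Fin n → ℂ) : matrixCentralizer n (P * diagonal D.diag * P⁻¹) :=
    ⟨P * diagonal e * P⁻¹, ((commute_conj_diagonal_iff hd hP).2 ⟨e, rfl⟩).eq⟩
  have hconj : Bijective conj := by
    refine ⟨fun e e' h => conj_diagonal_injective hP (congrArg Subtype.val h), fun M => ?_⟩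
    obtain ⟨e, he⟩ := (commute_conj_diagonal_iff hd hP).1 M.2
    exact ⟨e, Subtype.ext he⟩
  rw [← Bijective.of_comp_iff _ hconj]
  convert bijective_mul_vecMul (Pi.isUnit_iff.2 fun j => (hr j).isUnit)
    (isUnit_nonsing_inv_iff.2 ((isUnit_iff_isUnit_det P).2 hP)) using 2 with e
  exact mul_diagonal_mul_apply_eq_vecMul P P⁻¹ e r

/-- Let `A = P * D * P⁻¹` with `P` invertible and `D` diagonal
with pairwise distinct diagonal entries, and suppose every entry of row `r` of
`P` is nonzero. Then projecting the centralizer of `A` onto its `r`-th row is a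
bijection onto `ℂⁿ`. -/
theorem centralizer_row_projection_bijective (n : ℕ) (hn : 1 ≤ n)
    (P D : Matrix (Fin n) (Fin n) ℂ) (hP : IsUnit P.det)
    (hDdiag : ∀ i j, i ≠ j → D i j = 0)
    (hDdist : ∀ i j, i ≠ j → D i i ≠ D j j)
    (r : Fin n) (hr : ∀ j, P r j ≠ 0) :
    Function.Bijective
      (fun M : matrixCentralizer n (P * D * P⁻¹) =>
        fun j => (M : Matrix (Fin n) (Fin n) ℂ) r j) :=
  centralizer_row_projection_bijective_general n P D hP hDdiag hDdist r hr
end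

section
/- Let n ≥ 1 and let A : Matrix (Fin n) (Fin n) ℂ be a matrix whose characteristic polynomial has n pairwise distinct complex roots. Let a : Fin n → ℂ be such that for every μ : ℂ and every u : Fin n → ℂ with u ≠ 0 and A.mulVec u = μ • u, the dot product a ⬝ᵥ u is nonzero. If x : Fin n → ℂ and C : Matrix (Fin n) (Fin n) ℂ satisfy Matrix.vecMulVec x a = C * A − A * C, then x = 0. -/
/-!
For every `M` commuting with `A`, cyclicity of the trace turns `x aᵀ = [C, A]` into
`a ⬝ᵥ M x = tr (M [C, A]) = 0`. Taking `M = L_i(A)` for the Lagrange basis polynomials `L_i` at the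
distinct eigenvalues `λ_i`, the vector `L_i(A) x` is killed by `A - λ_i`, so it is zero or an
eigenvector; the latter is excluded because `a ⬝ᵥ L_i(A) x = 0`. Since `∑ L_i = 1`, summing
gives `x = 0`.
-/

open Matrix Polynomial

namespace Matrix

variable {ι R : Type*} [Fintype ι] [CommRing R]

theorem dotProduct_mulVec_eq_zero_of_vecMulVec_eq_commutator {A C M : Matrix ι ι R}
    {x a : ι → R} (h : vecMulVec x a = C * A - A * C) (hM : Commute A M) :
    a ⬝ᵥ (M *ᵥ x) = 0 := by
  rw [dotProduct_comm, ← trace_vecMulVec, ← mul_vecMulVec, h, mul_sub, trace_sub,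
    ← mul_assoc, trace_mul_cycle, hM.eq, mul_assoc, sub_self]

theorem mulVec_aeval_mulVec_eq_smul [DecidableEq ι] {A : Matrix ι ι R} {μ : R} {p : R[X]}
    (hp : aeval A ((X - C μ) * p) = 0) (v : ι → R) :
    A *ᵥ (aeval A p *ᵥ v) = μ • (aeval A p *ᵥ v) := by
  rw [map_mul, map_sub, aeval_X, aeval_C, sub_mul, sub_eq_zero] at hp
  rw [mulVec_mulVec, hp, Algebra.algebraMap_eq_smul_one, smul_mul_assoc, one_mul, smul_mulVec]

end Matrix

namespace Lagrange

theorem nodal_dvd_X_sub_C_mul_basis {F ι : Type*} [Field F] [DecidableEq ι] {s : Finset ι}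
    {v : ι → F} {i : ι} (hi : i ∈ s) : nodal s v ∣ (X - C (v i)) * Lagrange.basis s v i :=
  ⟨C (nodalWeight s v i), by
    rw [basis_eq_prod_sub_inv_mul_nodal_div hi, ← nodal_erase_eq_nodal_div hi,
      nodal_eq_mul_nodal_erase hi]
    ring⟩

end Lagrange

namespace Matrix

variable {ι K : Type*} [Fintype ι] [DecidableEq ι] [Field K]

theorem eq_zero_of_forall_dotProduct_aeval_mulVec_eq_zero {A : Matrix ι ι K} {s : Finset ι}
    {f : ι → K} (hf : Set.InjOn f s) (hA : aeval A (Lagrange.nodal s f) = 0) {a : ι → K}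
    (ha : ∀ (μ : K) (u : ι → K), u ≠ 0 → A *ᵥ u = μ • u → a ⬝ᵥ u ≠ 0) {v : ι → K}
    (hv : ∀ p : K[X], a ⬝ᵥ (aeval A p *ᵥ v) = 0) : v = 0 := by
  rcases s.eq_empty_or_nonempty with rfl | hs
  · rw [Lagrange.nodal_empty, map_one] at hA
    rw [← one_mulVec v, hA, zero_mulVec]
  have hbasis : ∀ i ∈ s, aeval A (Lagrange.basis s f i) *ᵥ v = 0 := fun i hi => by
    by_contra hne
    refine ha (f i) _ hne (mulVec_aeval_mulVec_eq_smul ?_ v) (hv _)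
    exact aeval_eq_zero_of_dvd_aeval_eq_zero (Lagrange.nodal_dvd_X_sub_C_mul_basis hi) hA
  calc v = aeval A (∑ i ∈ s, Lagrange.basis s f i) *ᵥ v := by
        rw [Lagrange.sum_basis hf hs, map_one, one_mulVec]
    _ = 0 := by rw [map_sum, sum_mulVec, Finset.sum_eq_zero hbasis]

end Matrix

theorem vecMulVec_commutator_eq_zero_general (n : ℕ)
    (A : Matrix (Fin n) (Fin n) ℂ)
    (hroots : ∃ f : Fin n → ℂ, Function.Injective f ∧
      A.charpoly = ∏ i, (X - Polynomial.C (f i)))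
    (a : Fin n → ℂ)
    (ha : ∀ (μ : ℂ) (u : Fin n → ℂ), u ≠ 0 → A.mulVec u = μ • u →
      dotProduct a u ≠ 0)
    (x : Fin n → ℂ) (C : Matrix (Fin n) (Fin n) ℂ)
    (h : Matrix.vecMulVec x a = C * A - A * C) : x = 0 := by
  obtain ⟨f, hf, hchar⟩ := hroots
  have hA : aeval A (Lagrange.nodal Finset.univ f) = 0 := by
    rw [Lagrange.nodal, ← hchar, aeval_self_charpoly]
  refine eq_zero_of_forall_dotProduct_aeval_mulVec_eq_zero hf.injOn hA ha fun p => ?_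
  refine dotProduct_mulVec_eq_zero_of_vecMulVec_eq_commutator h ?_
  simpa using (Commute.all X p).map (aeval A)

/-- If the characteristic polynomial of `A` has `n` pairwise
distinct roots and `a` pairs nontrivially with every eigenvector of `A`, then
a rank-one matrix `x aᵀ` can only be a commutator `[C, A]` if `x = 0`. -/
theorem vecMulVec_commutator_eq_zero (n : ℕ) (hn : 1 ≤ n)
    (A : Matrix (Fin n) (Fin n) ℂ)
    (hroots : ∃ f : Fin n → ℂ, Function.Injective f ∧
      A.charpoly = ∏ i, (X - Polynomial.C (f i)))
    (a : Fin n → ℂ)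
    (ha : ∀ (μ : ℂ) (u : Fin n → ℂ), u ≠ 0 → A.mulVec u = μ • u →
      dotProduct a u ≠ 0)
    (x : Fin n → ℂ) (C : Matrix (Fin n) (Fin n) ℂ)
    (h : Matrix.vecMulVec x a = C * A - A * C) : x = 0 :=
  vecMulVec_commutator_eq_zero_general n A hroots a ha x C h
end

section
/- Let n ≥ 1, let A : Matrix (Fin n) (Fin n) ℂ, and let i, j : Fin n with i ≠ j. Assume that the support of row j of A is contained in the support of row i (for all l, A j l ≠ 0 → A i l ≠ 0) and the support of column i of A is contained in the support of column j (for all k, A k i ≠ 0 → A k j ≠ 0). Let X = Matrix.stdBasisMatrix i j (1 : ℂ). Then for all k, l : Fin n, if A k l = 0 then (X * A − A * X) k l = 0; in other words, the support of the commutator [X, A] is contained in the support of A. -/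
open Matrix

/-!
Left multiplication by `E_{ij}` moves row `j` of `A` into row `i` and kills the other rows, and
right multiplication moves column `i` into column `j`. So each of the two products in
`[E_{ij}, A]` already vanishes wherever `A` does, by the respective support containment.
-/

namespace Matrix

variable {m n : Type*} {α : Type*} [Fintype m] [DecidableEq m]
  [NonUnitalNonAssocSemiring α]

theorem single_mul_apply_eq_zero_of_row_support_subset {A : Matrix m n α} {i j : m}
    (hrow : ∀ b, A j b ≠ 0 → A i b ≠ 0) (c : α) {a : m} {b : n} (hab : A a b = 0) :
    (single i j c * A) a b = 0 := by
  obtain rfl | ha := eq_or_ne a i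
  · rw [single_mul_apply_same, not_imp_not.mp (hrow b) hab, mul_zero]
  · exact single_mul_apply_of_ne c i j a b ha A

theorem mul_single_apply_eq_zero_of_col_support_subset {A : Matrix n m α} {i j : m}
    (hcol : ∀ a, A a i ≠ 0 → A a j ≠ 0) (c : α) {a : n} {b : m} (hab : A a b = 0) :
    (A * single i j c) a b = 0 := by
  obtain rfl | hb := eq_or_ne b j
  · rw [mul_single_apply_same, not_imp_not.mp (hcol a) hab, zero_mul]
  · exact mul_single_apply_of_ne c i j a b hb A

end Matrix

theorem commutator_stdBasisMatrix_support_general (n : ℕ)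
    (A : Matrix (Fin n) (Fin n) ℂ) (i j : Fin n)
    (hrow : ∀ l, A j l ≠ 0 → A i l ≠ 0)
    (hcol : ∀ k, A k i ≠ 0 → A k j ≠ 0) :
    ∀ k l, A k l = 0 →
      (Matrix.single i j (1 : ℂ) * A
        - A * Matrix.single i j (1 : ℂ)) k l = 0 := by
  intro k l hkl
  rw [Matrix.sub_apply, single_mul_apply_eq_zero_of_row_support_subset hrow 1 hkl,
    mul_single_apply_eq_zero_of_col_support_subset hcol 1 hkl, sub_zero]

/-- If the support of row `j` of `A` is contained in that of
row `i`, and the support of column `i` is contained in that of column `j`,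
then the support of the commutator `[E_{ij}, A]` is contained in the support
of `A`. -/
theorem commutator_stdBasisMatrix_support (n : ℕ) (hn : 1 ≤ n)
    (A : Matrix (Fin n) (Fin n) ℂ) (i j : Fin n) (hij : i ≠ j)
    (hrow : ∀ l, A j l ≠ 0 → A i l ≠ 0)
    (hcol : ∀ k, A k i ≠ 0 → A k j ≠ 0) :
    ∀ k l, A k l = 0 →
      (Matrix.single i j (1 : ℂ) * A
        - A * Matrix.single i j (1 : ℂ)) k l = 0 :=
  commutator_stdBasisMatrix_support_general n A i j hrow hcol
end

section
/- Let G be a strongly connected directed simple graph on a finite vertex type V with |V| ≥ 2. Then G is minimally strongly connected — i.e. for every pair (a,b) with E a b, the relation E' defined by E' x y ↔ (E x y ∧ ¬(x = a ∧ y = b)) is not strongly connected — if and only if no ear decomposition of G contains a trivial ear, i.e. in every ear decomposition of G each step adds a nontrivial ear. -/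
variable {V : Type*}

variable {V : Type*}

/-- The set of consecutive pairs of a list: the edges of the path it traces. -/
def chainPairs (L : List V) : Set (V × V) := {e | e ∈ L.zip L.tail}

/-- Adding a nontrivial ear: new distinct vertices `w₁, …, w_s` (`s ≥ 1`) outside
the current vertex set, attached by the path `k → w₁ → ⋯ → w_s → l` with
`k, l` in the current vertex set, all of whose edges are edges of `G`. -/
def IsEarStep (E : V → V → Prop) (p q : Set V × Set (V × V)) : Prop :=
  ∃ (k l : V) (ws : List V), ws ≠ [] ∧ ws.Nodup ∧ k ∈ p.1 ∧ l ∈ p.1 ∧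
    (∀ w ∈ ws, w ∉ p.1) ∧
    (∀ e ∈ chainPairs (k :: ws ++ [l]), E e.1 e.2) ∧
    q.1 = p.1 ∪ {x | x ∈ ws} ∧ q.2 = p.2 ∪ chainPairs (k :: ws ++ [l])

/-- Adding a trivial ear: a single new edge `k → l` of `G` between vertices of
the current vertex set. -/
def IsTrivialEarStep (E : V → V → Prop) (p q : Set V × Set (V × V)) : Prop :=
  ∃ k l : V, k ∈ p.1 ∧ l ∈ p.1 ∧ E k l ∧ (k, l) ∉ p.2 ∧
    q.1 = p.1 ∧ q.2 = p.2 ∪ {(k, l)}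

/-- A directed cycle of `G` through the vertex `r`, with at least two vertices,
recorded as a pair (vertex set, edge set). -/
def IsCycleAt (E : V → V → Prop) (r : V) (p : Set V × Set (V × V)) : Prop :=
  ∃ vs : List V, vs ≠ [] ∧ (r :: vs).Nodup ∧
    (∀ e ∈ chainPairs (r :: vs ++ [r]), E e.1 e.2) ∧
    p.1 = {x | x ∈ r :: vs} ∧ p.2 = chainPairs (r :: vs ++ [r])

/-- A nontrivial ear decomposition of `G` rooted at `r`: a sequence of pairs
(vertex set, edge set), starting with a cycle through `r`, each obtained from
the previous one by adding a nontrivial ear, and ending with all of `G`. -/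
def HasNontrivialEarDecomp (E : V → V → Prop) (r : V) : Prop :=
  ∃ (t : ℕ) (P : Fin (t + 1) → Set V × Set (V × V)),
    IsCycleAt E r (P 0) ∧
    (∀ i : Fin t, IsEarStep E (P i.castSucc) (P i.succ)) ∧
    (P (Fin.last t)).1 = Set.univ ∧ (P (Fin.last t)).2 = {e : V × V | E e.1 e.2}


/-!
Every stage of an ear decomposition is strongly connected through its own edges, so the endpoints
`k, l` of a trivial ear are already joined by a path of `G` avoiding the edge `k → l`, and deleting
`k → l` keeps `G` strongly connected.

Conversely, suppose `G - (a → b)` is strongly connected. It contains a cycle, and any strongly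
connected subgraph missing a vertex can be enlarged by an ear: leave its vertex set along some
edge and come back along a path that stays outside until it returns. Adding ears and then the
missing edges as trivial ears decomposes `G - (a → b)`; appending `a → b` as one more trivial ear
yields an ear decomposition of `G` with a trivial ear.
-/

open Relation

section Lists

variable {α : Type*} {R : α → α → Prop}

lemma mem_chainPairs_cons_cons {a b : α} {L : List α} {e : α × α} :
    e ∈ chainPairs (a :: b :: L) ↔ e = (a, b) ∨ e ∈ chainPairs (b :: L) := by
  simp [chainPairs]

lemma isChain_iff_forall_mem_chainPairs {L : List α} :
    L.IsChain R ↔ ∀ e ∈ chainPairs L, R e.1 e.2 := by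
  induction L using List.twoStepInduction with
  | nil | singleton => simp [chainPairs]
  | cons_cons a b L _ ih => simp [List.isChain_cons_cons, mem_chainPairs_cons_cons, ih]

lemma isChain_mem_chainPairs (L : List α) : L.IsChain (fun x y => (x, y) ∈ chainPairs L) :=
  isChain_iff_forall_mem_chainPairs.2 fun _ he => he

lemma List.IsChain.reflTransGen_of_mem {a b u : α} {L : List α}
    (h : (a :: L ++ [b]).IsChain R) (hu : u ∈ a :: L ++ [b]) :
    ReflTransGen R a u ∧ ReflTransGen R u b :=
  ⟨h.induction (ReflTransGen R a ·) _ (fun _ _ hxy hx => hx.tail hxy)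
      (fun _ => by simpa using ReflTransGen.refl) u hu,
    h.backwards_induction (ReflTransGen R · b) _ (fun _ _ hxy hy => hy.head hxy)
      (fun _ => by simpa using ReflTransGen.refl) u hu⟩

lemma forall_rel_snoc {t : ℕ} {P : Fin (t + 1) → α} {c : α}
    (hP : ∀ i : Fin t, R (P i.castSucc) (P i.succ)) (hc : R (P (Fin.last t)) c)
    (i : Fin (t + 1)) :
    R (Fin.snoc (α := fun _ => α) P c i.castSucc) (Fin.snoc (α := fun _ => α) P c i.succ) := by
  induction i using Fin.lastCases with
  | last => simpa using hc
  | cast j =>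
    rw [Fin.succ_castSucc, Fin.snoc_castSucc, Fin.snoc_castSucc]
    exact hP j

lemma exists_fin_of_reflTransGen {a b : α} (h : ReflTransGen R a b) :
    ∃ (t : ℕ) (P : Fin (t + 1) → α), P 0 = a ∧ P (Fin.last t) = b ∧
      ∀ i : Fin t, R (P i.castSucc) (P i.succ) := by
  induction h with
  | refl => exact ⟨0, fun _ => a, rfl, rfl, Fin.elim0⟩
  | tail _ hbc ih =>
    obtain ⟨t, P, h0, hlast, hP⟩ := ih
    exact ⟨t + 1, Fin.snoc P _, by simpa using h0, by simp, forall_rel_snoc hP (hlast ▸ hbc)⟩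

end Lists

def edgeSet (E : V → V → Prop) : Set (V × V) := {e | E e.1 e.2}

def deleteEdge (E : V → V → Prop) (a b : V) : V → V → Prop :=
  fun x y => E x y ∧ ¬(x = a ∧ y = b)

def StronglyConnectedOn (F : Set (V × V)) (S : Set V) : Prop :=
  ∀ u ∈ S, ∀ w ∈ S, ReflTransGen (fun x y => (x, y) ∈ F) u w

def IsEarOrTrivialEarStep (E : V → V → Prop) (p q : Set V × Set (V × V)) : Prop :=
  IsEarStep E p q ∨ IsTrivialEarStep E p q

section Stages

variable {E : V → V → Prop} {p q : Set V × Set (V × V)}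

lemma StronglyConnectedOn.mono {F F' : Set (V × V)} {S : Set V} (h : StronglyConnectedOn F S)
    (hF : F ⊆ F') : StronglyConnectedOn F' S :=
  fun u hu w hw => ReflTransGen.mono (fun _ _ hxy => hF hxy) _ _ (h u hu w hw)

lemma StronglyConnectedOn.union {F : Set (V × V)} {S T : Set V} (hS : StronglyConnectedOn F S)
    (hto : ∀ u ∈ T, ∃ x ∈ S, ReflTransGen (fun x y => (x, y) ∈ F) u x)
    (hfrom : ∀ u ∈ T, ∃ x ∈ S, ReflTransGen (fun x y => (x, y) ∈ F) x u) :
    StronglyConnectedOn F (S ∪ T) := by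
  intro u hu w hw
  obtain ⟨x, hx, hux⟩ : ∃ x ∈ S, ReflTransGen (fun x y => (x, y) ∈ F) u x := by
    rcases hu with hu | hu
    exacts [⟨u, hu, .refl⟩, hto u hu]
  obtain ⟨y, hy, hyw⟩ : ∃ y ∈ S, ReflTransGen (fun x y => (x, y) ∈ F) y w := by
    rcases hw with hw | hw
    exacts [⟨w, hw, .refl⟩, hfrom w hw]
  exact hux.trans ((hS x hx y hy).trans hyw)

lemma IsCycleAt.snd_subset_edgeSet {r : V} (h : IsCycleAt E r p) : p.2 ⊆ edgeSet E := by
  obtain ⟨_, -, -, hE, -, h2⟩ := h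
  exact h2 ▸ fun e he => hE e he

lemma IsCycleAt.stronglyConnectedOn {r : V} (h : IsCycleAt E r p) :
    StronglyConnectedOn p.2 p.1 := by
  obtain ⟨vs, -, -, -, h1, h2⟩ := h
  have hchain := isChain_mem_chainPairs (r :: vs ++ [r])
  intro u hu w hw
  rw [h1] at hu hw
  rw [h2]
  exact (hchain.reflTransGen_of_mem (List.mem_append_left _ hu)).2.trans
    (hchain.reflTransGen_of_mem (List.mem_append_left _ hw)).1

lemma IsEarStep.lt (h : IsEarStep E p q) : p < q := by
  obtain ⟨_, _, ws, hne, -, -, -, hout, -, h1, h2⟩ := h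
  obtain ⟨w, hw⟩ := List.exists_mem_of_ne_nil ws hne
  rw [Prod.lt_iff, h1, h2]
  exact Or.inl ⟨Set.ssubset_iff_of_subset Set.subset_union_left |>.2 ⟨w, Or.inr hw, hout w hw⟩,
    Set.subset_union_left⟩

lemma IsTrivialEarStep.lt (h : IsTrivialEarStep E p q) : p < q := by
  obtain ⟨k, l, -, -, -, hkl, h1, h2⟩ := h
  rw [Prod.lt_iff, h1, h2]
  exact Or.inr ⟨le_rfl,
    Set.ssubset_iff_of_subset Set.subset_union_left |>.2 ⟨(k, l), Or.inr rfl, hkl⟩⟩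

lemma IsEarOrTrivialEarStep.lt (h : IsEarOrTrivialEarStep E p q) : p < q :=
  h.elim IsEarStep.lt IsTrivialEarStep.lt

lemma IsEarOrTrivialEarStep.snd_subset_edgeSet (h : IsEarOrTrivialEarStep E p q)
    (hp : p.2 ⊆ edgeSet E) : q.2 ⊆ edgeSet E := by
  rcases h with ⟨k, l, ws, -, -, -, -, -, hE, -, h2⟩ | ⟨k, l, -, -, hkl, -, -, h2⟩
  · exact h2 ▸ Set.union_subset hp fun e he => hE e he
  · exact h2 ▸ Set.union_subset hp (by simpa [edgeSet] using hkl)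

lemma IsEarStep.stronglyConnectedOn (h : IsEarStep E p q) (hp : StronglyConnectedOn p.2 p.1) :
    StronglyConnectedOn q.2 q.1 := by
  obtain ⟨k, l, ws, -, -, hk, hl, -, -, h1, h2⟩ := h
  have hchain := (isChain_mem_chainPairs (k :: ws ++ [l])).imp
    fun x y hxy => (h2 ▸ Or.inr hxy : (x, y) ∈ q.2)
  have hws : ∀ u ∈ ws, u ∈ k :: ws ++ [l] := fun u hu => List.mem_append_left _ (.tail k hu)
  rw [h1]
  refine (hp.mono (by rw [h2]; exact Set.subset_union_left)).union
    (fun u hu => ⟨l, hl, (hchain.reflTransGen_of_mem (hws u hu)).2⟩)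
    (fun u hu => ⟨k, hk, (hchain.reflTransGen_of_mem (hws u hu)).1⟩)

lemma IsEarOrTrivialEarStep.stronglyConnectedOn (h : IsEarOrTrivialEarStep E p q)
    (hp : StronglyConnectedOn p.2 p.1) : StronglyConnectedOn q.2 q.1 := by
  rcases h with h | ⟨_, _, _, _, _, _, h1, h2⟩
  · exact h.stronglyConnectedOn hp
  · rw [h1]
    exact hp.mono (by rw [h2]; exact Set.subset_union_left)

end Stages

section Decompositions

variable {E R : V → V → Prop} {p q : Set V × Set (V × V)}

lemma Relation.ReflTransGen.deleteEdge {a b u w : V} (h : ReflTransGen E u w)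
    (hab : ReflTransGen (deleteEdge E a b) a b) : ReflTransGen (deleteEdge E a b) u w := by
  refine ReflTransGen.lift' id (fun x y hxy => ?_) _ _ h
  by_cases hx : x = a ∧ y = b
  · obtain ⟨rfl, rfl⟩ := hx
    exact hab
  · exact .single ⟨hxy, hx⟩

lemma snd_subset_edgeSet_and_stronglyConnectedOn {t : ℕ}
    {P : Fin (t + 1) → Set V × Set (V × V)} {r : V} (h0 : IsCycleAt E r (P 0))
    (hsteps : ∀ i : Fin t, IsEarOrTrivialEarStep E (P i.castSucc) (P i.succ)) (j : Fin (t + 1)) :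
    (P j).2 ⊆ edgeSet E ∧ StronglyConnectedOn (P j).2 (P j).1 := by
  induction j using Fin.induction with
  | zero => exact ⟨h0.snd_subset_edgeSet, h0.stronglyConnectedOn⟩
  | succ j ih =>
    exact ⟨(hsteps j).snd_subset_edgeSet ih.1, (hsteps j).stronglyConnectedOn ih.2⟩

lemma IsTrivialEarStep.exists_reflTransGen_deleteEdge (h : IsTrivialEarStep E p q)
    (hE : p.2 ⊆ edgeSet E) (hp : StronglyConnectedOn p.2 p.1) :
    ∃ k l, E k l ∧ ReflTransGen (deleteEdge E k l) k l := by
  obtain ⟨k, l, hk, hl, hkl, hnot, -, -⟩ := h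
  refine ⟨k, l, hkl, ReflTransGen.mono (fun x y hxy => ⟨hE hxy, ?_⟩) _ _ (hp k hk l hl)⟩
  rintro ⟨rfl, rfl⟩
  exact hnot hxy

lemma exists_rel_of_reflTransGen_of_mem_of_notMem {S : Set V} {u w : V}
    (h : ReflTransGen R u w) (hu : u ∈ S) (hw : w ∉ S) : ∃ x ∈ S, ∃ z ∉ S, R x z := by
  induction h with
  | refl => exact absurd hu hw
  | @tail b c _ hbc ih =>
    by_cases hb : b ∈ S
    exacts [⟨b, hb, c, hw, hbc⟩, ih hb]

lemma exists_nodup_isChain_of_reflTransGen {S : Set V} {u w : V} (h : ReflTransGen R u w)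
    (hw : w ∈ S) (hu : u ∉ S) :
    ∃ (tl : List V) (l : V), (u :: tl).Nodup ∧ (∀ v ∈ u :: tl, v ∉ S) ∧ l ∈ S ∧
      (u :: tl ++ [l]).IsChain R := by
  induction h using ReflTransGen.head_induction_on with
  | refl => exact absurd hw hu
  | @head a c hac _ ih =>
    by_cases hc : c ∈ S
    · exact ⟨[], c, by simp, by simpa using hu, hc, List.isChain_pair.2 hac⟩
    obtain ⟨tl, l, hnd, hout, hl, hch⟩ := ih hc
    by_cases ha : a ∈ c :: tl
    -- `a` reoccurs on the path from `c`: let the path start at that occurrence instead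
    · obtain ⟨pre, suf, hsplit⟩ := List.append_of_mem ha
      have hsuf : a :: suf ++ [l] <:+ c :: tl ++ [l] := by
        rw [hsplit, List.append_assoc]
        exact List.suffix_append pre _
      exact ⟨suf, l, (hsplit ▸ hnd).sublist (List.suffix_append pre _).sublist,
        fun v hv => hout v (hsplit ▸ List.mem_append_right pre hv), hl, hch.suffix hsuf⟩
    · refine ⟨c :: tl, l, List.nodup_cons.2 ⟨ha, hnd⟩, ?_, hl, hch.cons_cons hac⟩
      rintro v (_ | ⟨_, hv⟩)
      exacts [hu, hout v hv]

lemma exists_ear (hsc : ∀ u w, ReflTransGen R u w) {S : Set V} {u v : V} (hu : u ∈ S)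
    (hv : v ∉ S) : ∃ k ∈ S, ∃ l ∈ S, ∃ ws : List V, ws ≠ [] ∧ ws.Nodup ∧ (∀ w ∈ ws, w ∉ S) ∧
      (k :: ws ++ [l]).IsChain R := by
  obtain ⟨k, hk, z, hz, hkz⟩ := exists_rel_of_reflTransGen_of_mem_of_notMem (hsc u v) hu hv
  obtain ⟨tl, l, hnd, hout, hl, hch⟩ := exists_nodup_isChain_of_reflTransGen (hsc z u) hu hz
  exact ⟨k, hk, l, hl, z :: tl, List.cons_ne_nil _ _, hnd, hout, hch.cons_cons hkz⟩

lemma exists_isEarStep (hsc : ∀ u w, ReflTransGen R u w) (hne : p.1.Nonempty)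
    (hp : p.1 ≠ Set.univ) : ∃ q, IsEarStep R p q := by
  obtain ⟨u, hu⟩ := hne
  obtain ⟨v, hv⟩ := (Set.ne_univ_iff_exists_notMem _).1 hp
  obtain ⟨k, hk, l, hl, ws, hne, hnd, hout, hch⟩ := exists_ear hsc hu hv
  exact ⟨(p.1 ∪ {x | x ∈ ws}, p.2 ∪ chainPairs (k :: ws ++ [l])), k, l, ws, hne, hnd, hk, hl,
    hout, isChain_iff_forall_mem_chainPairs.1 hch, rfl, rfl⟩

lemma exists_isCycleAt (hsc : ∀ u w, ReflTransGen R u w) {u v : V} (huv : u ≠ v) :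
    ∃ r p, IsCycleAt R r p := by
  obtain ⟨k, hk, l, hl, ws, hne, hnd, hout, hch⟩ :=
    exists_ear hsc (S := {u}) rfl (Set.mem_singleton_iff.not.2 huv.symm)
  rw [Set.mem_singleton_iff.1 hk, Set.mem_singleton_iff.1 hl] at hch
  exact ⟨u, ({x | x ∈ u :: ws}, chainPairs (u :: ws ++ [u])), ws, hne,
    List.nodup_cons.2 ⟨fun hu => hout u hu rfl, hnd⟩, isChain_iff_forall_mem_chainPairs.1 hch,
    rfl, rfl⟩

lemma IsCycleAt.fst_nonempty {r : V} (h : IsCycleAt E r p) : p.1.Nonempty := by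
  obtain ⟨_, -, -, -, h1, -⟩ := h
  exact ⟨r, h1 ▸ List.mem_cons_self⟩

lemma reflTransGen_isEarOrTrivialEarStep_univ [Finite V] (hsc : ∀ u w, ReflTransGen R u w)
    (hne : p.1.Nonempty) (hp : p.2 ⊆ edgeSet R) :
    ReflTransGen (IsEarOrTrivialEarStep R) p (Set.univ, edgeSet R) := by
  induction p using WellFoundedGT.induction with
  | _ p ih =>
  have step (q) (hq : IsEarOrTrivialEarStep R p q) :
      ReflTransGen (IsEarOrTrivialEarStep R) p (Set.univ, edgeSet R) :=
    .head hq (ih q hq.lt (hne.mono hq.lt.le.1) (hq.snd_subset_edgeSet hp))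
  by_cases h1 : p.1 = Set.univ
  · by_cases h2 : edgeSet R ⊆ p.2
    · rw [show p = (Set.univ, edgeSet R) from Prod.ext h1 (hp.antisymm h2)]
    · obtain ⟨e, he, hep⟩ := Set.not_subset.1 h2
      exact step (p.1, p.2 ∪ {e})
        (Or.inr ⟨e.1, e.2, h1 ▸ trivial, h1 ▸ trivial, he, hep, rfl, rfl⟩)
  · obtain ⟨q, hq⟩ := exists_isEarStep hsc hne h1
    exact step q (Or.inl hq)

end Decompositions

section Monotonicity

variable {E₁ E₂ : V → V → Prop} {p q : Set V × Set (V × V)}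

lemma IsCycleAt.mono (h : ∀ x y, E₁ x y → E₂ x y) {r : V} :
    IsCycleAt E₁ r p → IsCycleAt E₂ r p :=
  fun ⟨vs, hne, hnd, hE, h1, h2⟩ => ⟨vs, hne, hnd, fun e he => h _ _ (hE e he), h1, h2⟩

lemma IsEarOrTrivialEarStep.mono (h : ∀ x y, E₁ x y → E₂ x y) :
    IsEarOrTrivialEarStep E₁ p q → IsEarOrTrivialEarStep E₂ p q
  | .inl ⟨k, l, ws, hne, hnd, hk, hl, hout, hE, h1, h2⟩ =>
    .inl ⟨k, l, ws, hne, hnd, hk, hl, hout, fun e he => h _ _ (hE e he), h1, h2⟩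
  | .inr ⟨k, l, hk, hl, hkl, hnot, h1, h2⟩ => .inr ⟨k, l, hk, hl, h _ _ hkl, hnot, h1, h2⟩

end Monotonicity

lemma isTrivialEarStep_deleteEdge {E : V → V → Prop} {a b : V} (hab : E a b) :
    IsTrivialEarStep E (Set.univ, edgeSet (deleteEdge E a b)) (Set.univ, edgeSet E) := by
  refine ⟨a, b, trivial, trivial, hab, fun h => h.2 ⟨rfl, rfl⟩, rfl, ?_⟩
  ext ⟨x, y⟩
  simp only [edgeSet, deleteEdge, Set.mem_union, Set.mem_ofPred_eq, Set.mem_singleton_iff,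
    Prod.mk.injEq]
  constructor
  · tauto
  · rintro (⟨hxy, -⟩ | ⟨rfl, rfl⟩)
    exacts [hxy, hab]

lemma not_isEarStep_of_fst_eq_univ {E : V → V → Prop} {p q : Set V × Set (V × V)}
    (hp : p.1 = Set.univ) : ¬ IsEarStep E p q := by
  rintro ⟨-, -, ws, hne, -, -, -, hout, -⟩
  obtain ⟨w, hw⟩ := List.exists_mem_of_ne_nil ws hne
  exact hout w hw (hp ▸ trivial)

lemma exists_decomposition_not_isEarStep [Fintype V] {E : V → V → Prop}
    (hcard : 2 ≤ Fintype.card V) {a b : V} (hab : E a b)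
    (hconn : ∀ u w, ReflTransGen (deleteEdge E a b) u w) :
    ∃ (t : ℕ) (P : Fin (t + 1) → Set V × Set (V × V)), (∃ r, IsCycleAt E r (P 0)) ∧
      (∀ i : Fin t, IsEarOrTrivialEarStep E (P i.castSucc) (P i.succ)) ∧
      (P (Fin.last t)).1 = Set.univ ∧ (P (Fin.last t)).2 = edgeSet E ∧
      ∃ i : Fin t, ¬ IsEarStep E (P i.castSucc) (P i.succ) := by
  have hsub : ∀ x y, deleteEdge E a b x y → E x y := fun _ _ h => h.1
  obtain ⟨u, v, huv⟩ := Fintype.exists_pair_of_one_lt_card (by omega : 1 < Fintype.card V)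
  obtain ⟨r, p₀, hp₀⟩ := exists_isCycleAt hconn huv
  obtain ⟨t, P, hP0, hPlast, hP⟩ := exists_fin_of_reflTransGen
    (reflTransGen_isEarOrTrivialEarStep_univ hconn hp₀.fst_nonempty hp₀.snd_subset_edgeSet)
  refine ⟨t + 1, Fin.snoc P (Set.univ, edgeSet E), ⟨r, ?_⟩,
    forall_rel_snoc (fun i => (hP i).mono hsub) (hPlast ▸ .inr (isTrivialEarStep_deleteEdge hab)),
    by simp, by simp, Fin.last t, ?_⟩
  · simpa [hP0] using hp₀.mono hsub
  · simpa using not_isEarStep_of_fst_eq_univ (by rw [hPlast])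

theorem minimallyStronglyConnected_iff_no_trivial_ears_general [Fintype V]
    (E : V → V → Prop)
    (hcard : 2 ≤ Fintype.card V)
    (hsc : ∀ u w : V, Relation.ReflTransGen E u w) :
    (∀ a b, E a b →
      ¬ (∀ u w : V, Relation.ReflTransGen
          (fun x y => E x y ∧ ¬(x = a ∧ y = b)) u w))
    ↔
    (∀ (t : ℕ) (P : Fin (t + 1) → Set V × Set (V × V)),
      (∃ r : V, IsCycleAt E r (P 0)) →
      (∀ i : Fin t, IsEarStep E (P i.castSucc) (P i.succ) ∨
        IsTrivialEarStep E (P i.castSucc) (P i.succ)) →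
      (P (Fin.last t)).1 = Set.univ →
      (P (Fin.last t)).2 = {e : V × V | E e.1 e.2} →
      ∀ i : Fin t, IsEarStep E (P i.castSucc) (P i.succ)) := by
  constructor
  · intro hmin t P ⟨r, h0⟩ hsteps _ _ i
    refine (hsteps i).resolve_right fun htriv => ?_
    obtain ⟨hE, hconn⟩ := snd_subset_edgeSet_and_stronglyConnectedOn h0 hsteps i.castSucc
    obtain ⟨k, l, hkl, hbypass⟩ := htriv.exists_reflTransGen_deleteEdge hE hconn
    exact hmin k l hkl fun u w => (hsc u w).deleteEdge hbypass
  · intro hno a b hab hconn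
    obtain ⟨t, P, h0, hsteps, hlast₁, hlast₂, i, hi⟩ :=
      exists_decomposition_not_isEarStep hcard hab hconn
    exact hi (hno t P h0 hsteps hlast₁ hlast₂ i)

/-- A strongly connected directed simple graph `G` on a
finite vertex type with at least two vertices is minimally strongly connected
if and only if in every ear decomposition of `G` (starting from a directed
cycle, each step adding a nontrivial or a trivial ear, and ending with all of
`G`) every step adds a nontrivial ear. -/
theorem minimallyStronglyConnected_iff_no_trivial_ears [Fintype V]
    (E : V → V → Prop) (hirr : ∀ u, ¬ E u u)
    (hcard : 2 ≤ Fintype.card V)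
    (hsc : ∀ u w : V, Relation.ReflTransGen E u w) :
    (∀ a b, E a b →
      ¬ (∀ u w : V, Relation.ReflTransGen
          (fun x y => E x y ∧ ¬(x = a ∧ y = b)) u w))
    ↔
    (∀ (t : ℕ) (P : Fin (t + 1) → Set V × Set (V × V)),
      (∃ r : V, IsCycleAt E r (P 0)) →
      (∀ i : Fin t, IsEarStep E (P i.castSucc) (P i.succ) ∨
        IsTrivialEarStep E (P i.castSucc) (P i.succ)) →
      (P (Fin.last t)).1 = Set.univ →
      (P (Fin.last t)).2 = {e : V × V | E e.1 e.2} →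
      ∀ i : Fin t, IsEarStep E (P i.castSucc) (P i.succ)) :=
  minimallyStronglyConnected_iff_no_trivial_ears_general E hcard hsc
end
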